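/- arXiv:1204.5145 — 8 statements merged into one kernel-verified Lean document; each statement's English description precedes it below -/
import Mathlib

section
/- In a commutative ring, for 1 ≤ i < j ≤ k, the signed continuant polynomials satisfy q(a_1,...,a_{j−1})·q(a_{i+1},...,a_k) = q(a_1,...,a_{i−1})·q(a_{j+1},...,a_k) + q(a_1,...,a_k)·q(a_{i+1},...,a_{j−1}). -/
/-- Auxiliary: signed continuant of a reversed list (head = last variable). -/
def contAux {R : Type*} [CommRing R] : List R → R
  | [] => 1
  | [a] => a
  | a :: b :: l => contAux (b :: l) * a - contAux l

/-- The signed continuant polynomial `q(a_1, …, a_n)`: `q() = 1`, `q(a_1) = a_1`,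
`q(a_1,…,a_n) = q(a_1,…,a_{n-1})·a_n − q(a_1,…,a_{n-2})`. -/
def continuant {R : Type*} [CommRing R] (l : List R) : R := contAux l.reverse

section aux

variable {R : Type*} [CommRing R]

@[simp] lemma contAux_nil : contAux ([] : List R) = 1 := rfl
@[simp] lemma contAux_singleton (a : R) : contAux [a] = a := rfl
lemma contAux_cons_cons (a b : R) (l : List R) :
    contAux (a :: b :: l) = contAux (b :: l) * a - contAux l := rfl

@[simp] lemma continuant_nil : continuant ([] : List R) = 1 := rfl
@[simp] lemma continuant_singleton (a : R) : continuant [a] = a := rfl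

lemma contAux_append (a b : R) (w : List R) :
    ∀ u : List R, contAux (u ++ a :: b :: w) =
      contAux (b :: w) * contAux (u ++ [a]) - contAux w * contAux u
  | [] => by simp [contAux_cons_cons]
  | [x] => by
    simp only [List.cons_append, List.nil_append, contAux_cons_cons, contAux_singleton,
      contAux_nil]
    ring
  | x :: y :: u => by
    have h1 := contAux_append a b w (y :: u)
    have h2 := contAux_append a b w u
    simp only [List.cons_append, contAux_cons_cons] at h1 h2 ⊢
    rw [h1, h2]
    ring

lemma continuant_split (x : List R) (b a : R) (y : List R) :
    continuant (x ++ b :: a :: y) =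
      continuant (x ++ [b]) * continuant (a :: y) - continuant x * continuant y := by
  unfold continuant
  have h : (x ++ b :: a :: y).reverse = y.reverse ++ a :: b :: x.reverse := by
    simp
  rw [h, contAux_append]
  have h2 : (x ++ [b]).reverse = b :: x.reverse := by simp
  have h3 : (a :: y).reverse = y.reverse ++ [a] := by simp
  rw [h2, h3]

lemma lemK (v : R) (C : List R) :
    ∀ (B : List R) (b : R),
      continuant (B ++ v :: C) * continuant (b :: B) -
        continuant B * continuant (b :: (B ++ v :: C)) = continuant C
  | [], b => by
    have h := continuant_split [] b v C
    simp only [List.nil_append, continuant_nil, continuant_singleton, one_mul, mul_one] at h ⊢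
    linear_combination -h
  | p :: B, b => by
    have h1 := continuant_split [] b p B
    have h2 := continuant_split [] b p (B ++ v :: C)
    have ih := lemK v C B p
    simp only [List.nil_append, List.cons_append, continuant_nil, continuant_singleton,
      one_mul, mul_one] at h1 h2 ⊢
    linear_combination continuant (p :: (B ++ v :: C)) * h1 - continuant (p :: B) * h2 + ih

lemma lemM (u v : R) (A C : List R) :
    ∀ B : List R,
      continuant (A ++ u :: B) * continuant (B ++ v :: C) =
        continuant A * continuant C + continuant (A ++ u :: (B ++ v :: C)) * continuant B
  | [] => by
    have h := continuant_split A u v C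
    simp only [List.nil_append, continuant_nil, mul_one] at h ⊢
    linear_combination -h
  | b :: B => by
    have h1 := continuant_split A u b B
    have h2 := continuant_split A u b (B ++ v :: C)
    have hk := lemK v C B b
    simp only [List.cons_append] at h1 h2 ⊢
    linear_combination continuant (b :: (B ++ v :: C)) * h1 - continuant (b :: B) * h2 +
      continuant A * hk

end aux

/-- For `1 ≤ i < j ≤ k` (with `l = (a_1,…,a_k)`):
`q(a_1,…,a_{j−1})·q(a_{i+1},…,a_k)
  = q(a_1,…,a_{i−1})·q(a_{j+1},…,a_k) + q(a_1,…,a_k)·q(a_{i+1},…,a_{j−1})`. -/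
theorem continuant_ptolemy {R : Type*} [CommRing R] (l : List R) (i j : ℕ)
    (h1 : 1 ≤ i) (hij : i < j) (hj : j ≤ l.length) :
    continuant (l.take (j - 1)) * continuant (l.drop i) =
      continuant (l.take (i - 1)) * continuant (l.drop j) +
        continuant l * continuant ((l.drop i).take (j - 1 - i)) := by
  have hi' : i - 1 < l.length := by omega
  have hj' : j - 1 < l.length := by omega
  set u := l[i-1] with hu
  set v := l[j-1] with hv
  set A := l.take (i-1) with hA
  set B := (l.drop i).take (j-1-i) with hB
  set C := l.drop j with hC
  have hdi : l.drop (i-1) = u :: l.drop i := by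
    have h := List.drop_eq_getElem_cons hi'
    rw [show i - 1 + 1 = i by omega] at h
    exact h
  have hdj : l.drop (j-1) = v :: C := by
    have h := List.drop_eq_getElem_cons hj'
    rw [show j - 1 + 1 = j by omega] at h
    exact h
  have e1 : l.take (j-1) = A ++ u :: B := by
    have : j - 1 = (i - 1) + (j - i) := by omega
    rw [this, List.take_add, hdi, hA]
    congr 1
    have : j - i = (j - 1 - i) + 1 := by omega
    rw [this, List.take_succ_cons]
  have e2 : l.drop i = B ++ v :: C := by
    conv_lhs => rw [← List.take_append_drop (j-1-i) (l.drop i)]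
    rw [List.drop_drop]
    congr 1
    rw [show i + (j - 1 - i) = j - 1 by omega, hdj]
  have e3 : l = A ++ u :: (B ++ v :: C) := by
    conv_lhs => rw [← List.take_append_drop (j-1) l]
    rw [e1, hdj, List.append_assoc, List.cons_append]
  rw [e1, e2]
  rw [show continuant l = continuant (A ++ u :: (B ++ v :: C)) from by rw [← e3]]
  exact lemM u v A C B
end

section
/- With μ the monoid homomorphism from words on {x,y} to SL_2(ℤ) given by μ(x)=[[1,1],[0,1]], μ(y)=[[1,0],[1,1]], for any word w and any natural numbers k, l, the determinant of the 2×2 matrix [[μ(w)_{22}, (μ(w)μ(y)^l μ(x))_{22}], [(μ(y)μ(x)^k μ(w))_{22}, (μ(y)μ(x)^k μ(w)μ(y)^l μ(x))_{22}]] equals 1. -/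
/-- The matrix `μ(x) = [[1,1],[0,1]]`. -/
def muX : Matrix (Fin 2) (Fin 2) ℤ := !![1, 1; 0, 1]

/-- The matrix `μ(y) = [[1,0],[1,1]]`. -/
def muY : Matrix (Fin 2) (Fin 2) ℤ := !![1, 0; 1, 1]

/-- Words on the alphabet `{x, y}` are lists of booleans: `true` codes the
letter `x` and `false` codes the letter `y`. `mu` is the monoid homomorphism
sending a word to the corresponding product of the matrices `μ(x)`, `μ(y)`. -/
def mu (w : List Bool) : Matrix (Fin 2) (Fin 2) ℤ :=
  (w.map (fun b => if b then muX else muY)).prod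

lemma muX_pow (k : ℕ) : muX ^ k = !![1, (k : ℤ); 0, 1] := by
  induction k with
  | zero => rw [pow_zero, Matrix.one_fin_two]; norm_num
  | succ n ih =>
    rw [pow_succ, ih, muX]
    ext i j
    fin_cases i <;> fin_cases j <;>
      simp [Matrix.mul_apply, Fin.sum_univ_two] <;> ring

lemma muY_pow (l : ℕ) : muY ^ l = !![1, 0; (l : ℤ), 1] := by
  induction l with
  | zero => rw [pow_zero, Matrix.one_fin_two]; norm_num
  | succ n ih =>
    rw [pow_succ, ih, muY]
    ext i j
    fin_cases i <;> fin_cases j <;>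
      simp [Matrix.mul_apply, Fin.sum_univ_two] <;> ring

lemma det_mu (w : List Bool) : (mu w).det = 1 := by
  induction w with
  | nil => simp [mu]
  | cons b t ih =>
    simp only [mu, List.map_cons, List.prod_cons] at *
    rw [Matrix.det_mul, ih]
    cases b <;> simp [muX, muY, Matrix.det_fin_two_of]

/-- The SL₂-condition for adjacent 2×2 minors of the tiling `t(P) = μ(word of P)₂₂`:
for any word `w` and naturals `k, l`, the matrix
`[[μ(w)₂₂, (μ(w)μ(y)^l μ(x))₂₂], [(μ(y)μ(x)^k μ(w))₂₂, (μ(y)μ(x)^k μ(w)μ(y)^l μ(x))₂₂]]`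
has determinant 1. -/
theorem adjacent_minor_eq_one (w : List Bool) (k l : ℕ) :
    Matrix.det !![mu w 1 1,                 (mu w * muY ^ l * muX) 1 1;
                  (muY * muX ^ k * mu w) 1 1, (muY * muX ^ k * mu w * muY ^ l * muX) 1 1]
      = 1 := by
  have hM : (mu w).det = 1 := det_mu w
  rw [Matrix.det_fin_two] at hM
  have hP : muY * muX ^ k = !![1, (k : ℤ); 1, (k : ℤ) + 1] := by
    rw [muX_pow, muY]
    ext i j
    fin_cases i <;> fin_cases j <;>
      simp [Matrix.mul_apply, Fin.sum_univ_two]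
  have hN : muY ^ l * muX = !![1, 1; (l : ℤ), (l : ℤ) + 1] := by
    rw [muY_pow, muX]
    ext i j
    fin_cases i <;> fin_cases j <;>
      simp [Matrix.mul_apply, Fin.sum_univ_two]
  have e1 : mu w * muY ^ l * muX = mu w * (muY ^ l * muX) := by rw [mul_assoc]
  have e2 : muY * muX ^ k * mu w * muY ^ l * muX
      = muY * muX ^ k * (mu w * (muY ^ l * muX)) := by
    rw [mul_assoc, mul_assoc, mul_assoc]
  rw [e1, e2, hP, hN]
  simp only [Matrix.det_fin_two_of, Matrix.mul_apply, Fin.sum_univ_two,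
    Matrix.cons_val_zero, Matrix.cons_val_one, Matrix.head_cons,
    Matrix.cons_val', Matrix.empty_val', Matrix.cons_val_fin_one,
    Matrix.head_fin_const, Matrix.of_apply]
  linear_combination hM
end

section
/- If (a_n) and (b_n) are sequences of natural numbers that are ultimately equal (agree for all n ≥ N for some N), and (a_n) is ℕ-rational, then (b_n) is ℕ-rational. -/
/-!
Shifting a linear representation `λ Mⁿ γ` by `k` steps only replaces `λ` by `λ Mᵏ`, so the tail
`n ↦ a (n + N)` is ℕ-rational, and it is also the tail of `b`. Conversely, one initial term can be
prepended to an ℕ-rational sequence by adding one coordinate to the representation; doing this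
`N` times recovers `b` from its tail.
-/

/-- A sequence of natural numbers is ℕ-rational if it admits a linear
representation `a n = λ Mⁿ γ` by matrices over ℕ, with `d ≥ 1`. -/
def NRational (a : ℕ → ℕ) : Prop :=
  ∃ (d : ℕ) (_ : 1 ≤ d) (lam : Matrix (Fin 1) (Fin d) ℕ)
    (M : Matrix (Fin d) (Fin d) ℕ) (gam : Matrix (Fin d) (Fin 1) ℕ),
    ∀ n : ℕ, a n = (lam * M ^ n * gam) 0 0

namespace NRational

theorem of_fintype_repr {ι : Type*} [Fintype ι] [DecidableEq ι] [Nonempty ι] {a : ℕ → ℕ}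
    (lam : Matrix (Fin 1) ι ℕ) (M : Matrix ι ι ℕ) (gam : Matrix ι (Fin 1) ℕ)
    (h : ∀ n, a n = (lam * M ^ n * gam) 0 0) : NRational a := by
  let e := Fintype.equivFin ι
  refine ⟨Fintype.card ι, Fintype.card_pos, Matrix.reindex (.refl _) e lam,
    Matrix.reindexAlgEquiv ℕ ℕ e M, Matrix.reindex e (.refl _) gam, fun n => ?_⟩
  rw [← map_pow, Matrix.coe_reindexAlgEquiv, Matrix.reindex_apply, Matrix.reindex_apply,
    Matrix.reindex_apply, Matrix.submatrix_mul_equiv, Matrix.submatrix_mul_equiv, h n]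
  rfl

theorem comp_add {a : ℕ → ℕ} (ha : NRational a) (k : ℕ) : NRational (fun n => a (n + k)) := by
  obtain ⟨d, hd, lam, M, gam, hrep⟩ := ha
  refine ⟨d, hd, lam * M ^ k, M, gam, fun n => ?_⟩
  show a (n + k) = _
  rw [hrep, add_comm, pow_add, ← Matrix.mul_assoc lam]

/-- The new coordinate is a source state: `λ' = (1, 0)` leaves it after one step through the
block `(0, λ)` of `M'`, so `λ' M'ⁿ⁺¹ = (0, λ Mⁿ)`, while `γ'` stores `b 0` there. -/
theorem of_comp_succ {b : ℕ → ℕ} (hb : NRational (fun n => b (n + 1))) : NRational b := by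
  obtain ⟨d, -, lam, M, gam, hrep⟩ := hb
  let lam' : Matrix (Fin 1) (Fin 1 ⊕ Fin d) ℕ := Matrix.fromCols 1 0
  let M' : Matrix (Fin 1 ⊕ Fin d) (Fin 1 ⊕ Fin d) ℕ := Matrix.fromBlocks 0 lam 0 M
  have row : ∀ n, lam' * M' ^ (n + 1) = Matrix.fromCols 0 (lam * M ^ n) := by
    intro n
    induction n with
    | zero => rw [zero_add, pow_one, Matrix.fromCols_mul_fromBlocks]; simp
    | succ n ih =>
      rw [pow_succ, ← Matrix.mul_assoc, ih, Matrix.fromCols_mul_fromBlocks]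
      simp [pow_succ, Matrix.mul_assoc]
  refine of_fintype_repr lam' M' (Matrix.fromRows (.of fun _ _ => b 0) gam) fun n => ?_
  cases n with
  | zero => simp [lam', Matrix.fromCols_mul_fromRows]
  | succ n => rw [row, Matrix.fromCols_mul_fromRows]; simp [hrep]

theorem of_comp_add {b : ℕ → ℕ} (k : ℕ) (hb : NRational (fun n => b (n + k))) : NRational b := by
  induction k with
  | zero => simpa using hb
  | succ k ih =>
    exact ih (of_comp_succ (by simpa only [Nat.add_assoc, Nat.add_comm 1 k] using hb))

end NRational

/-- If two sequences of natural numbers are ultimately equal and one is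
ℕ-rational, then so is the other. -/
theorem nrational_of_eventually_eq (a b : ℕ → ℕ) (N : ℕ)
    (h : ∀ n, N ≤ n → a n = b n) (ha : NRational a) : NRational b := by
  refine NRational.of_comp_add N ?_
  simpa only [h _ (Nat.le_add_left N _)] using ha.comp_add N
end

section
/- Any sequence of the form a_n = λ (M')^n N M^n γ, where λ is a nonnegative integer row vector, γ a nonnegative integer column vector, and M', N, M are nonnegative integer square matrices (of compatible sizes), is ℕ-rational. -/
open Matrix Kronecker

lemma kron_pow {d e : ℕ} (A : Matrix (Fin d) (Fin d) ℕ) (B : Matrix (Fin e) (Fin e) ℕ)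
    (n : ℕ) : (A ⊗ₖ B) ^ n = (A ^ n) ⊗ₖ (B ^ n) := by
  induction n with
  | zero => simp [Matrix.one_kronecker_one]
  | succ k ih => rw [pow_succ, pow_succ, pow_succ, ih, Matrix.mul_kronecker_mul]

lemma pow_submatrix {k l : Type*} [Fintype k] [Fintype l] [DecidableEq k] [DecidableEq l]
    (σ : l ≃ k) (A : Matrix k k ℕ) (n : ℕ) :
    (A.submatrix σ σ) ^ n = (A ^ n).submatrix σ σ := by
  induction n with
  | zero =>
    simp [pow_zero, Matrix.submatrix_one_equiv]
  | succ m ih =>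
    rw [pow_succ, pow_succ, ih, Matrix.submatrix_mul_equiv]


lemma sum_perm {α β γ δ : Type*} [Fintype α] [Fintype β] [Fintype γ] [Fintype δ]
    (g : α → β → γ → δ → ℕ) :
    ∑ q : δ, ∑ b : β, ∑ p : α, ∑ a : γ, g p b a q
      = ∑ p : α, ∑ b : β, ∑ a : γ, ∑ q : δ, g p b a q := by
  conv_lhs => rw [Finset.sum_comm]
  conv_lhs => enter [2, b]; rw [Finset.sum_comm]
  conv_lhs => enter [2, b, 2, p]; rw [Finset.sum_comm]
  conv_lhs => rw [Finset.sum_comm]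

/-- Any sequence of the form `n ↦ λ (M')ⁿ N Mⁿ γ`, with all matrices over ℕ
of compatible sizes, is ℕ-rational. -/
theorem nrational_twisted_product (d e : ℕ)
    (lam : Matrix (Fin 1) (Fin d) ℕ) (M' : Matrix (Fin d) (Fin d) ℕ)
    (N : Matrix (Fin d) (Fin e) ℕ) (M : Matrix (Fin e) (Fin e) ℕ)
    (gam : Matrix (Fin e) (Fin 1) ℕ) :
    NRational (fun n => (lam * M' ^ n * N * M ^ n * gam) 0 0) := by
  rcases Nat.eq_zero_or_pos d with hd | hd
  · subst hd
    refine ⟨1, le_refl 1, 0, 0, 0, fun n => ?_⟩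
    have h1 : lam * M' ^ n * N = 0 := by
      ext i j
      simp [Matrix.mul_apply]
    simp [h1]
  rcases Nat.eq_zero_or_pos e with he | he
  · subst he
    refine ⟨1, le_refl 1, 0, 0, 0, fun n => ?_⟩
    have h1 : lam * M' ^ n * N * M ^ n * gam = 0 := by
      ext i j
      simp [Matrix.mul_apply]
    simp [h1]
  -- main case
  set σ : Fin (d * e) ≃ Fin d × Fin e := finProdFinEquiv.symm with hσ
  set L : Matrix (Fin 1) (Fin d × Fin e) ℕ := Matrix.of fun _ pq => lam 0 pq.1 * gam pq.2 0 with hL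
  set K : Matrix (Fin d × Fin e) (Fin d × Fin e) ℕ := M' ⊗ₖ (Mᵀ) with hK
  set G : Matrix (Fin d × Fin e) (Fin 1) ℕ := Matrix.of fun pq _ => N pq.1 pq.2 with hG
  refine ⟨d * e, Nat.one_le_iff_ne_zero.mpr (by positivity), L.submatrix id σ,
    K.submatrix σ σ, G.submatrix σ id, fun n => ?_⟩
  rw [pow_submatrix, Matrix.submatrix_mul_equiv, Matrix.submatrix_mul_equiv,
    Matrix.submatrix_id_id]
  -- now the entry identity
  show (lam * M' ^ n * N * M ^ n * gam) 0 0 = (L * K ^ n * G) 0 0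
  rw [hK, kron_pow]
  simp only [hL, hG, Matrix.mul_apply, Matrix.kroneckerMap_apply, ← Matrix.transpose_pow,
    Matrix.transpose_apply, Fintype.sum_prod_type, Matrix.of_apply,
    Finset.sum_mul, Finset.mul_sum, Fin.sum_univ_one]
  refine Eq.trans ?_ (sum_perm
    (fun p b a q => lam 0 a * gam q 0 * ((M' ^ n) a p * (M ^ n) b q) * N p b))
  refine Finset.sum_congr rfl fun q _ => Finset.sum_congr rfl fun b _ =>
    Finset.sum_congr rfl fun p _ => Finset.sum_congr rfl fun a _ => ?_
  ring
end

section
/- Let G be a finite simple connected graph and h : V(G) → ℝ_{>0} an additive function (2h(v) = Σ_{w adjacent to v} h(w) for all v). If f : V(G) → ℝ_{>0} is subadditive (2f(v) ≥ Σ_{w adjacent to v} f(w) for all v), then f is additive. -/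
open Finset

lemma neighbor_sum_comm {V : Type*} [Fintype V] [DecidableEq V]
    (G : SimpleGraph V) [DecidableRel G.Adj] (g : V → V → ℝ) :
    ∑ v, ∑ w ∈ G.neighborFinset v, g v w = ∑ w, ∑ v ∈ G.neighborFinset w, g v w := by
  have : ∀ v : V, ∑ w ∈ G.neighborFinset v, g v w
      = ∑ w, if G.Adj v w then g v w else 0 := by
    intro v
    rw [← Finset.sum_filter]
    congr 1
    ext w
    simp [SimpleGraph.mem_neighborFinset]
  simp only [this]
  rw [Finset.sum_comm]
  congr 1; funext w
  rw [← Finset.sum_filter]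
  congr 1
  ext v
  simp only [Finset.mem_filter, Finset.mem_univ, true_and, SimpleGraph.mem_neighborFinset]
  exact G.adj_comm v w

/-- If a finite simple connected graph admits a positive additive function `h`
(`2·h v = Σ_{w ~ v} h w` for all `v`), then every positive subadditive function
`f` (`2·f v ≥ Σ_{w ~ v} f w` for all `v`) is in fact additive. -/
theorem subadditive_is_additive_of_additive_exists
    {V : Type*} [Fintype V] [DecidableEq V]
    (G : SimpleGraph V) [DecidableRel G.Adj] (hG : G.Connected)
    (h : V → ℝ) (hpos : ∀ v, 0 < h v)
    (hadd : ∀ v, 2 * h v = ∑ w ∈ G.neighborFinset v, h w)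
    (f : V → ℝ) (fpos : ∀ v, 0 < f v)
    (fsub : ∀ v, ∑ w ∈ G.neighborFinset v, f w ≤ 2 * f v) :
    ∀ v, 2 * f v = ∑ w ∈ G.neighborFinset v, f w := by
  -- consider S = ∑ v, h v * (2 f v - ∑_{w~v} f w) ≥ 0, and show S = 0
  have key : ∑ v, h v * (2 * f v - ∑ w ∈ G.neighborFinset v, f w) = 0 := by
    have swap : ∑ v, ∑ w ∈ G.neighborFinset v, h v * f w
        = ∑ w, ∑ v ∈ G.neighborFinset w, h v * f w := neighbor_sum_comm G _
    calc ∑ v, h v * (2 * f v - ∑ w ∈ G.neighborFinset v, f w)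
        = ∑ v, (2 * h v * f v) - ∑ v, ∑ w ∈ G.neighborFinset v, h v * f w := by
          rw [← Finset.sum_sub_distrib]
          refine Finset.sum_congr rfl fun v _ => ?_
          rw [mul_sub, Finset.mul_sum]; ring
      _ = ∑ v, (2 * h v * f v) - ∑ w, (∑ v ∈ G.neighborFinset w, h v) * f w := by
          rw [swap]
          congr 1
          refine Finset.sum_congr rfl fun w _ => ?_
          rw [Finset.sum_mul]
      _ = 0 := by
          rw [sub_eq_zero]
          refine Finset.sum_congr rfl fun w _ => ?_
          rw [show ∑ v ∈ G.neighborFinset w, h v = 2 * h w from (hadd w).symm]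
  have nonneg : ∀ v ∈ Finset.univ, 0 ≤ h v * (2 * f v - ∑ w ∈ G.neighborFinset v, f w) :=
    fun v _ => mul_nonneg (hpos v).le (by linarith [fsub v])
  intro v
  have := (Finset.sum_eq_zero_iff_of_nonneg nonneg).mp key v (Finset.mem_univ v)
  have hv := (hpos v).ne'
  have : 2 * f v - ∑ w ∈ G.neighborFinset v, f w = 0 := by
    rcases mul_eq_zero.mp this with h1 | h1
    · exact absurd h1 hv
    · exact h1
  linarith
end

section
/- Let G be a finite connected simple graph, G' a proper connected subgraph (strictly fewer vertices or strictly fewer edges), and f a subadditive positive function on G. Then the restriction of f to G' is subadditive on G' but not additive on G'. -/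
open Finset

/-- Restriction of a positive subadditive function on a finite connected graph
`G` to a proper connected subgraph `G'` is subadditive on `G'` but not
additive on `G'`. -/
theorem restriction_subadditive_not_additive
    {V : Type*} [Fintype V] [DecidableEq V]
    (G : SimpleGraph V) [DecidableRel G.Adj] (hG : G.Connected)
    (G' : G.Subgraph) [DecidableRel G'.Adj] (hG'conn : G'.Connected)
    (hproper : G' ≠ ⊤)
    (f : V → ℝ) (fpos : ∀ v, 0 < f v)
    (fsub : ∀ v, ∑ w ∈ G.neighborFinset v, f w ≤ 2 * f v) :
    (∀ v ∈ G'.verts, ∑ w ∈ Finset.univ.filter (fun w => G'.Adj v w), f w ≤ 2 * f v) ∧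
      ¬ (∀ v ∈ G'.verts, ∑ w ∈ Finset.univ.filter (fun w => G'.Adj v w), f w = 2 * f v) := by
  have hsubset : ∀ v : V, Finset.univ.filter (fun w => G'.Adj v w) ⊆ G.neighborFinset v := by
    intro v w hw
    simp only [Finset.mem_filter] at hw
    simpa using hw.2.adj_sub
  have hle : ∀ v : V, ∑ w ∈ Finset.univ.filter (fun w => G'.Adj v w), f w
      ≤ ∑ w ∈ G.neighborFinset v, f w := by
    intro v
    exact Finset.sum_le_sum_of_subset_of_nonneg (hsubset v) (fun i _ _ => (fpos i).le)
  refine ⟨fun v _ => (hle v).trans (fsub v), ?_⟩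
  intro hadd
  -- equality forces all G-neighbors of vertices of G' to be G'-neighbors
  have hclosed : ∀ v ∈ G'.verts, ∀ w, G.Adj v w → G'.Adj v w := by
    intro v hv w hw
    have heq : Finset.univ.filter (fun w => G'.Adj v w) = G.neighborFinset v := by
      by_contra hne
      have hssub : Finset.univ.filter (fun w => G'.Adj v w) ⊂ G.neighborFinset v :=
        (Finset.ssubset_iff_subset_ne).2 ⟨hsubset v, hne⟩
      obtain ⟨x, hx, hxn⟩ := Finset.exists_of_ssubset hssub
      have : ∑ w ∈ Finset.univ.filter (fun w => G'.Adj v w), f w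
          < ∑ w ∈ G.neighborFinset v, f w :=
        Finset.sum_lt_sum_of_subset (hsubset v) hx hxn (fpos x) (fun i _ _ => (fpos i).le)
      have := lt_of_lt_of_le this (fsub v)
      rw [hadd v hv] at this
      exact lt_irrefl _ this
    have : w ∈ Finset.univ.filter (fun w => G'.Adj v w) := by
      rw [heq]; simpa using hw
    simpa using this
  -- hence G'.verts is all of V
  have hverts : ∀ u : V, u ∈ G'.verts := by
    obtain ⟨v₀, hv₀⟩ := hG'conn.nonempty
    intro u
    obtain ⟨p⟩ := hG.preconnected v₀ u
    induction p with
    | nil => exact hv₀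
    | cons h p ih =>
      exact ih ((hclosed _ hv₀ _ h).snd_mem)
  -- hence G' = ⊤
  apply hproper
  ext v w
  · simp [hverts v]
  · simp only [SimpleGraph.Subgraph.top_adj]
    exact ⟨fun h => h.adj_sub, fun h => hclosed v (hverts v) w h⟩
end

section
/- Consider the frieze sequences a_n, b_n of the Kronecker quiver (two vertices, double arrow), defined by a_0 = b_0 = 1, a_{n+1} = (1 + b_n^2)/a_n and b_{n+1} = (1 + a_{n+1}^2)/b_n. Then all a_n and b_n are integers, and in fact (a_n, b_n) = (F_{4n−2}, F_{4n}) in terms of the Fibonacci numbers F (with suitable indexing F_1 = F_2 = 1), so that all frieze values are Fibonacci numbers of even index. -/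
private lemma cassini (n : ℕ) :
    (Nat.fib (n + 1) : ℤ) ^ 2 - Nat.fib n * Nat.fib (n + 2) = (-1) ^ n := by
  induction n with
  | zero => simp
  | succ m ih =>
    have h := Nat.fib_add_two (n := m)
    have h2 := Nat.fib_add_two (n := m + 1)
    push_cast [h2, Nat.fib_add_two (n := m)]
    push_cast [Nat.fib_add_two (n := m)] at ih
    ring_nf
    ring_nf at ih
    linarith [ih]

private lemma key (m : ℕ) :
    (Nat.fib (2 * m + 5) : ℤ) * Nat.fib (2 * m + 1) = Nat.fib (2 * m + 3) ^ 2 + 1 := by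
  have c := cassini (2 * m + 1)
  rw [Odd.neg_one_pow ⟨m, by ring⟩] at c
  have e3 : Nat.fib (2 * m + 3) = Nat.fib (2 * m + 1) + Nat.fib (2 * m + 2) :=
    Nat.fib_add_two
  have e4 : Nat.fib (2 * m + 4) = Nat.fib (2 * m + 2) + Nat.fib (2 * m + 3) :=
    Nat.fib_add_two
  have e5 : Nat.fib (2 * m + 5) = Nat.fib (2 * m + 3) + Nat.fib (2 * m + 4) :=
    Nat.fib_add_two
  push_cast [e5, e4, e3]
  push_cast [show 2 * m + 1 + 1 = 2 * m + 2 from rfl,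
    show 2 * m + 1 + 2 = 2 * m + 3 from rfl, e3] at c
  linear_combination -c

/-- The frieze of the Kronecker quiver consists of Fibonacci numbers of even
index: if `a 0 = b 0 = 1`, `a (n+1) · a n = 1 + (b n)²` and
`b (n+1) · b n = 1 + (a (n+1))²` (the multiplicative form of the recursions
`a_{n+1} = (1 + b_n²)/a_n`, `b_{n+1} = (1 + a_{n+1}²)/b_n`), then all values
are integers: with the indexing `F₀ = F₁ = 1` (so `F_m = Nat.fib (m+1)`),
`a n = F_{4n−2}` and `b n = F_{4n}`. -/
theorem kronecker_frieze_fibonacci (a b : ℕ → ℚ)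
    (ha0 : a 0 = 1) (hb0 : b 0 = 1)
    (ha : ∀ n, a (n + 1) * a n = 1 + (b n) ^ 2)
    (hb : ∀ n, b (n + 1) * b n = 1 + (a (n + 1)) ^ 2) :
    ∀ n, (∃ k : ℤ, a n = k) ∧ (∃ k : ℤ, b n = k) ∧
      a n = Nat.fib ((4 * n - 2) + 1) ∧ b n = Nat.fib (4 * n + 1) := by
  have main : ∀ n, a n = Nat.fib ((4 * n - 2) + 1) ∧ b n = Nat.fib (4 * n + 1) := by
    intro n
    induction n with
    | zero => simp [ha0, hb0]
    | succ n ih =>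
      obtain ⟨ihA, ihB⟩ := ih
      have hAne : (Nat.fib ((4 * n - 2) + 1) : ℚ) ≠ 0 := by
        exact_mod_cast (Nat.fib_pos.mpr (Nat.succ_pos _)).ne'
      have hBne : (Nat.fib (4 * n + 1) : ℚ) ≠ 0 := by
        exact_mod_cast (Nat.fib_pos.mpr (Nat.succ_pos _)).ne'
      have idA : (Nat.fib (4 * n + 3) : ℚ) * Nat.fib ((4 * n - 2) + 1)
          = 1 + (Nat.fib (4 * n + 1) : ℚ) ^ 2 := by
        cases n with
        | zero => norm_num [Nat.fib]
        | succ m =>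
          have := key (2 * m + 1)
          have h1 : 2 * (2 * m + 1) + 5 = 4 * (m + 1) + 3 := by ring
          have h2 : 2 * (2 * m + 1) + 1 = (4 * (m + 1) - 2) + 1 := by omega
          have h3 : 2 * (2 * m + 1) + 3 = 4 * (m + 1) + 1 := by ring
          rw [h1, h2, h3] at this
          exact_mod_cast by linarith [this]
      have hstepA : a (n + 1) = Nat.fib (4 * n + 3) := by
        have h := ha n
        rw [ihA, ihB] at h
        apply mul_right_cancel₀ hAne
        rw [h]
        exact idA.symm
      have idB : (Nat.fib (4 * n + 5) : ℚ) * Nat.fib (4 * n + 1)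
          = 1 + (Nat.fib (4 * n + 3) : ℚ) ^ 2 := by
        have := key (2 * n)
        have h1 : 2 * (2 * n) + 5 = 4 * n + 5 := by ring
        have h3 : 2 * (2 * n) + 3 = 4 * n + 3 := by ring
        rw [h1, h3, show 2 * (2 * n) + 1 = 4 * n + 1 by ring] at this
        exact_mod_cast by linarith [this]
      have hstepB : b (n + 1) = Nat.fib (4 * n + 5) := by
        have h := hb n
        rw [ihB, hstepA] at h
        apply mul_right_cancel₀ hBne
        rw [h]
        exact idB.symm
      constructor
      · rw [show (4 * (n + 1) - 2) + 1 = 4 * n + 3 by omega]; exact hstepA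
      · rw [show 4 * (n + 1) + 1 = 4 * n + 5 by omega]; exact hstepB
  intro n
  obtain ⟨h1, h2⟩ := main n
  exact ⟨⟨Nat.fib ((4 * n - 2) + 1), by rw [h1]; push_cast; ring⟩,
    ⟨Nat.fib (4 * n + 1), by rw [h2]; push_cast; ring⟩, h1, h2⟩
end

section
/- Let t be a tame SL_2-tiling of the plane over a field (an infinite matrix of rank 2 with every adjacent 2×2 minor equal to 1). Then for any three consecutive columns C_0, C_1, C_2 of t, there exists a unique scalar α such that C_0 + C_2 = α·C_1; moreover α equals the determinant of the 2×2 matrix formed by the entries of C_0 and C_2 in any two adjacent rows. -/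
/-- A function `t : ℤ² → K` is an SL₂-tiling if every adjacent 2×2 minor
equals 1 (coordinates: the second axis indexes rows). -/
def IsSL2Tiling {K : Type*} [Field K] (t : ℤ × ℤ → K) : Prop :=
  ∀ x y : ℤ, t (x, y) * t (x + 1, y + 1) - t (x + 1, y) * t (x, y + 1) = 1

/-- An SL₂-tiling is tame if every contiguous 3×3 minor vanishes (the tiling,
viewed as an infinite matrix, has rank 2). -/
def IsTame {K : Type*} [Field K] (t : ℤ × ℤ → K) : Prop :=
  ∀ x y : ℤ,
    (Matrix.of fun i j : Fin 3 => t (x + (j : ℤ), y + (i : ℤ))).det = 0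

/-!
Write `C₀, C₁, C₂` for the columns `x, x + 1, x + 2` and `α y` for the 2×2 minor of `C₀, C₂` in
rows `y, y + 1`. The two unimodular minors of `C₀, C₁` and `C₁, C₂` alone give
`C₀ + C₂ = α y • C₁` in both rows `y` and `y + 1`, so `(α (y + 1) - α y) · C₁ (y + 1) = 0`.
Tameness of rows `y, y + 1, y + 2` supplies `(α (y + 1) - α y) · C₁ (y + 2) = 0`, and two
adjacent entries of a column never both vanish, so `α` is constant along the column.
-/

def wideMinor {K : Type*} [Field K] (t : ℤ × ℤ → K) (x y : ℤ) : K :=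
  t (x, y) * t (x + 2, y + 1) - t (x + 2, y) * t (x, y + 1)

namespace IsSL2Tiling

variable {K : Type*} [Field K] {t : ℤ × ℤ → K}

theorem ne_zero_or_ne_zero (ht : IsSL2Tiling t) (x y : ℤ) :
    t (x, y) ≠ 0 ∨ t (x, y + 1) ≠ 0 := by
  by_contra! h
  simpa [h.1, h.2] using ht x y

theorem eq_of_mul_eq_mul_of_mul_eq_mul (ht : IsSL2Tiling t) {x y : ℤ} {a b : K}
    (h₀ : a * t (x, y) = b * t (x, y)) (h₁ : a * t (x, y + 1) = b * t (x, y + 1)) : a = b := by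
  rcases ht.ne_zero_or_ne_zero x y with h | h
  exacts [mul_right_cancel₀ h h₀, mul_right_cancel₀ h h₁]

theorem succ_minor_eq_one (ht : IsSL2Tiling t) (x y : ℤ) :
    t (x + 1, y) * t (x + 2, y + 1) - t (x + 2, y) * t (x + 1, y + 1) = 1 := by
  simpa [add_assoc, one_add_one_eq_two] using ht (x + 1) y

theorem add_eq_wideMinor_mul (ht : IsSL2Tiling t) (x y : ℤ) :
    t (x, y) + t (x + 2, y) = wideMinor t x y * t (x + 1, y) := by
  unfold wideMinor
  linear_combination -t (x, y) * ht.succ_minor_eq_one x y - t (x + 2, y) * ht x y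

theorem add_eq_wideMinor_mul_succ (ht : IsSL2Tiling t) (x y : ℤ) :
    t (x, y + 1) + t (x + 2, y + 1) = wideMinor t x y * t (x + 1, y + 1) := by
  unfold wideMinor
  linear_combination -t (x, y + 1) * ht.succ_minor_eq_one x y - t (x + 2, y + 1) * ht x y

/-- Replacing `C₂` by `C₀ + C₂` and expanding the vanishing 3×3 minor along that column, only the
entry in row `y + 2` survives, with cofactor the unimodular minor of `C₀, C₁` in rows `y, y + 1`. -/
theorem wideMinor_succ_sub_mul_eq_zero (ht : IsSL2Tiling t) (htame : IsTame t) (x y : ℤ) :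
    (wideMinor t x (y + 1) - wideMinor t x y) * t (x + 1, y + 2) = 0 := by
  have hdet := htame x y
  simp only [Matrix.det_fin_three, Matrix.of_apply] at hdet
  norm_num at hdet
  have hrow₀ := ht.add_eq_wideMinor_mul x y
  have hrow₁ := ht.add_eq_wideMinor_mul_succ x y
  have hrow₂ := ht.add_eq_wideMinor_mul_succ x (y + 1)
  rw [add_assoc y, one_add_one_eq_two] at hrow₂
  linear_combination hdet
    - (t (x, y + 1) * t (x + 1, y + 2) - t (x + 1, y + 1) * t (x, y + 2)) * hrow₀
    + (t (x, y) * t (x + 1, y + 2) - t (x + 1, y) * t (x, y + 2)) * hrow₁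
    - (t (x, y) * t (x + 1, y + 1) - t (x + 1, y) * t (x, y + 1)) * hrow₂
    - (wideMinor t x (y + 1) - wideMinor t x y) * t (x + 1, y + 2) * ht x y

theorem wideMinor_succ (ht : IsSL2Tiling t) (htame : IsTame t) (x y : ℤ) :
    wideMinor t x (y + 1) = wideMinor t x y := by
  refine ht.eq_of_mul_eq_mul_of_mul_eq_mul (x := x + 1) (y := y + 1) ?_ ?_
  · rw [← ht.add_eq_wideMinor_mul, ht.add_eq_wideMinor_mul_succ]
  · rw [add_assoc y, one_add_one_eq_two]
    linear_combination ht.wideMinor_succ_sub_mul_eq_zero htame x y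

theorem wideMinor_eq (ht : IsSL2Tiling t) (htame : IsTame t) (x y₀ y : ℤ) :
    wideMinor t x y₀ = wideMinor t x y := by
  have hperiodic : Function.Periodic (wideMinor t x) 1 := ht.wideMinor_succ htame x
  have hconst (y : ℤ) : wideMinor t x y = wideMinor t x 0 := by
    simpa using hperiodic.int_mul_eq y
  rw [hconst y₀, hconst y]

end IsSL2Tiling

/-- Linearization of columns in a tame SL₂-tiling: for any three consecutive
columns `C₀, C₁, C₂` there is a unique scalar `α` with `C₀ + C₂ = α·C₁`, and
`α` equals the 2×2 determinant formed by the entries of `C₀` and `C₂` in any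
two adjacent rows. -/
theorem tame_tiling_column_linearization {K : Type*} [Field K]
    (t : ℤ × ℤ → K) (ht : IsSL2Tiling t) (htame : IsTame t) (x : ℤ) :
    (∃! α : K, ∀ y : ℤ, t (x, y) + t (x + 2, y) = α * t (x + 1, y)) ∧
      ∀ y₀ y : ℤ,
        t (x, y) + t (x + 2, y) =
          (t (x, y₀) * t (x + 2, y₀ + 1) - t (x + 2, y₀) * t (x, y₀ + 1)) *
            t (x + 1, y) := by
  have hlin (y₀ y : ℤ) : t (x, y) + t (x + 2, y) = wideMinor t x y₀ * t (x + 1, y) := by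
    rw [ht.wideMinor_eq htame x y₀ y, ht.add_eq_wideMinor_mul]
  refine ⟨⟨wideMinor t x 0, hlin 0, fun β hβ => ?_⟩, hlin⟩
  exact ht.eq_of_mul_eq_mul_of_mul_eq_mul (x := x + 1) (y := 0)
    ((hβ 0).symm.trans (hlin 0 0)) ((hβ 1).symm.trans (hlin 0 1))
end
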